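/- arXiv:2108.12163 — 2 statements merged into one kernel-verified Lean document; each statement's English description precedes it below -/
import Mathlib

section
/- Let 𝒯 ∈ 𝕄_r^{tt} have left orthogonal decomposition [T₁,…,T_m] with incoherence Incoh(𝒯) ≤ √μ. Then for every i ∈ [m−1], max_{xᵢ} ‖Tᵢ(:,xᵢ,:)‖_F² ≤ μrᵢ/dᵢ and ‖Tᵢ‖_F = √rᵢ; moreover max_{x_m} ‖T_m(:,x_m)‖_F² ≤ σ_max(𝒯)²·μr_{m−1}/d_m and ‖T_m‖_F = ‖𝒯‖_F ≤ √(min_i rᵢ)·σ_max(𝒯). -/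
open Matrix

noncomputable def frobNorm {ι κ : Type*} [Fintype ι] [Fintype κ] (A : Matrix ι κ ℝ) : ℝ :=
  Real.sqrt (∑ i, ∑ j, (A i j) ^ 2)

noncomputable def rowNorm {ι κ : Type*} [Fintype κ] (A : Matrix ι κ ℝ) (i : ι) : ℝ :=
  Real.sqrt (∑ j, (A i j) ^ 2)

noncomputable def twoInfNorm {ι κ : Type*} [Fintype ι] [Fintype κ] (A : Matrix ι κ ℝ) : ℝ :=
  ⨆ i, rowNorm A i

noncomputable def linfNorm {ι κ : Type*} [Fintype ι] [Fintype κ] (A : Matrix ι κ ℝ) : ℝ :=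
  ⨆ i, ⨆ j, |A i j|

noncomputable def opNorm {ι κ : Type*} [Fintype ι] [Fintype κ] (A : Matrix ι κ ℝ) : ℝ :=
  sSup {c : ℝ | ∃ x : κ → ℝ, (∑ j, (x j) ^ 2) ≤ 1 ∧
    c = Real.sqrt (∑ i, (∑ j, A i j * x j) ^ 2)}

noncomputable def sigmaMinPos {ι κ : Type*} [Fintype ι] [Fintype κ] (A : Matrix ι κ ℝ) : ℝ :=
  sInf {c : ℝ | ∃ y : ι → ℝ, (∑ j, (Aᵀ.mulVec y j) ^ 2) = 1 ∧
    c = Real.sqrt (∑ i, (A.mulVec (Aᵀ.mulVec y) i) ^ 2)}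

noncomputable def chordalDist {ι : Type*} [Fintype ι] {r : ℕ} (U V : Matrix ι (Fin r) ℝ) : ℝ :=
  sInf {c : ℝ | ∃ Q : Matrix (Fin r) (Fin r) ℝ, Qᵀ * Q = 1 ∧ c = frobNorm (U * Q - V)}

noncomputable def incoh {ι κ : Type*} [Fintype ι] [Fintype κ] (A : Matrix ι κ ℝ) : ℝ :=
  Real.sqrt ((Fintype.card ι : ℝ) / (Fintype.card κ)) * twoInfNorm A

abbrev sepRow (d : ℕ → ℕ) (m i : ℕ) : Type :=
  (j : {j : Fin m // (j : ℕ) < i}) → Fin (d j.1)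

abbrev sepCol (d : ℕ → ℕ) (m i : ℕ) : Type :=
  (j : {j : Fin m // ¬ (j : ℕ) < i}) → Fin (d j.1)

def sep {m : ℕ} (d : ℕ → ℕ) (T : ((j : Fin m) → Fin (d j)) → ℝ) (i : ℕ) :
    Matrix (sepRow d m i) (sepCol d m i) ℝ :=
  Matrix.of fun a b => T fun j => if h : (j : ℕ) < i then a ⟨j, h⟩ else b ⟨j, h⟩

def mergeRow (d : ℕ → ℕ) (m i : ℕ) (w : sepRow d m i) (y : Fin (d i)) :
    sepRow d m (i + 1) := fun j =>
  if h : (j.1 : ℕ) < i then w ⟨j.1, h⟩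
  else Fin.cast (congrArg d (by have h2 := j.2; omega)) y

def extendCol (d : ℕ → ℕ) (m i : ℕ) (y : Fin (d i)) (c : sepCol d m (i + 1)) :
    sepCol d m i := fun j =>
  if h : (j.1 : ℕ) = i then Fin.cast (congrArg d h.symm) y
  else c ⟨j.1, by have h2 := j.2; omega⟩

def lastCol (d : ℕ → ℕ) (m : ℕ) (x : Fin (d (m - 1))) : sepCol d m (m - 1) :=
  fun j => Fin.cast (congrArg d (by have h2 := j.2; have h3 := j.1.2; omega)) x

def ttProd (r d : ℕ → ℕ) (C : (i : ℕ) → Fin (d i) → Matrix (Fin (r i)) (Fin (r (i + 1))) ℝ)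
    {m : ℕ} (x : (j : Fin m) → Fin (d j)) :
    (k : ℕ) → k ≤ m → Matrix (Fin (r 0)) (Fin (r k)) ℝ
  | 0, _ => 1
  | k + 1, h => ttProd r d C x k (Nat.le_of_succ_le h) * C k (x ⟨k, h⟩)

noncomputable def ttTensor (r d : ℕ → ℕ)
    (C : (i : ℕ) → Fin (d i) → Matrix (Fin (r i)) (Fin (r (i + 1))) ℝ) (m : ℕ) :
    ((j : Fin m) → Fin (d j)) → ℝ :=
  fun x => ∑ a, ∑ b, ttProd r d C x m le_rfl a b

noncomputable def tfrob {m : ℕ} {d : ℕ → ℕ} (T : ((j : Fin m) → Fin (d j)) → ℝ) : ℝ :=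
  Real.sqrt (∑ x, (T x) ^ 2)

noncomputable def tNuclear {m : ℕ} {d : ℕ → ℕ} (T : ((j : Fin m) → Fin (d j)) → ℝ) : ℝ :=
  sInf {s : ℝ | ∃ (k : ℕ) (c : Fin k → ℝ) (u : (l : Fin k) → (j : Fin m) → Fin (d j) → ℝ),
    (∀ l j, ∑ y, (u l j y) ^ 2 = 1) ∧
    (∀ x, T x = ∑ l, c l * ∏ j, u l j (x j)) ∧ s = ∑ l, |c l|}

/-!
Separating the modes at `i` factors the tensor as `𝒯⟨i⟩ = Wᵢ Rᵢᵀ`, where row `a` of the left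
interface `Wᵢ` is the product of the first `i` cores along `a`. Left orthogonality of the cores
makes `Wᵢ` column-orthonormal, so `Wᵢ` and the factor `Uᵢ` of `𝒯⟨i⟩ = Uᵢ Sᵢ Vᵢᵀ` span the same
column space and differ by an orthogonal matrix; in particular their rows have the same norms.
As `Wᵢ` is orthonormal, `‖Tᵢ(:,xᵢ,:)‖_F = ‖Wᵢ Tᵢ(:,xᵢ,:)‖_F`, and the rows of `Wᵢ Tᵢ(:,xᵢ,:)`
are the `N / dᵢ` rows of `Wᵢ₊₁` with `xᵢ` fixed, `N` being the number of rows of `Uᵢ₊₁`; by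
incoherence each has squared norm at most `μ r / N`.
For the last core, `T_m(:,x_m)` has the norm of the column `x_m` of
`𝒯⟨m-1⟩ = 𝒯⟨m-1⟩ Vₘ₋₁ Vₘ₋₁ᵀ`, which is `𝒯⟨m-1⟩` applied to `Vₘ₋₁` times a row of `Vₘ₋₁`.
Finally `‖𝒯‖_F = ‖𝒯⟨i⟩ Vᵢ‖_F ≤ √rᵢ σ_max` for every `i`.
-/

section LinearAlgebra

variable {ι κ α : Type*}

lemma sum_sq_eq_trace_transpose_mul_self [Fintype ι] [Fintype κ] (A : Matrix ι κ ℝ) :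
    ∑ i, ∑ j, A i j ^ 2 = trace (Aᵀ * A) := by
  simp only [trace, diag, mul_apply, transpose_apply, sq]
  exact Finset.sum_comm

lemma sum_sq_mulVec_of_transpose_mul_self_eq_one [Fintype ι] [Fintype α] [DecidableEq α]
    {Q : Matrix ι α ℝ} (hQ : Qᵀ * Q = 1) (w : α → ℝ) :
    ∑ i, (Q *ᵥ w) i ^ 2 = ∑ j, w j ^ 2 := by
  have h : (Q *ᵥ w) ⬝ᵥ (Q *ᵥ w) = w ⬝ᵥ w := by
    rw [dotProduct_comm, dotProduct_mulVec, ← mulVec_transpose, mulVec_mulVec, hQ, one_mulVec]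
  simpa only [dotProduct, sq] using h

lemma sum_sq_mul_of_transpose_mul_self_eq_one [Fintype ι] [Fintype κ] [Fintype α] [DecidableEq α]
    {A : Matrix ι α ℝ} (hA : Aᵀ * A = 1) (B : Matrix α κ ℝ) :
    ∑ i, ∑ j, (A * B) i j ^ 2 = ∑ k, ∑ j, B k j ^ 2 := by
  rw [sum_sq_eq_trace_transpose_mul_self, sum_sq_eq_trace_transpose_mul_self, transpose_mul,
    Matrix.mul_assoc, ← Matrix.mul_assoc Aᵀ, hA, Matrix.one_mul]

lemma sum_sq_mul_transpose_apply [Fintype κ] [Fintype α] [DecidableEq α]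
    {Q : Matrix κ α ℝ} (hQ : Qᵀ * Q = 1) (B : Matrix ι α ℝ) (a : ι) :
    ∑ k, (B * Qᵀ) a k ^ 2 = ∑ j, B a j ^ 2 := by
  have h : (fun k => (B * Qᵀ) a k) = Q *ᵥ B a := by
    ext k
    simp only [mul_apply, transpose_apply, mulVec, dotProduct, mul_comm]
  rw [← sum_sq_mulVec_of_transpose_mul_self_eq_one hQ (B a), ← h]

lemma sum_sq_col_of_transpose_mul_self_eq_one [Fintype κ] [DecidableEq α]
    {V : Matrix κ α ℝ} (hV : Vᵀ * V = 1) (k : α) : ∑ c, V c k ^ 2 = 1 := by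
  simpa [mul_apply, sq] using congrFun (congrFun hV k) k

lemma sum_sum_sq_eq_card_of_sum_transpose_mul_self_eq_one [Fintype ι] [Fintype κ] [DecidableEq κ]
    [Fintype α] {M : α → Matrix ι κ ℝ} (h : ∑ y, (M y)ᵀ * M y = 1) :
    ∑ y, ∑ i, ∑ j, M y i j ^ 2 = Fintype.card κ := by
  simp only [sum_sq_eq_trace_transpose_mul_self, ← trace_sum, h, trace_one]

end LinearAlgebra

lemma transpose_mul_self_eq_sum_submatrix {R ι ι' Y κ : Type*} [CommSemiring R] [Fintype ι]
    [Fintype ι'] [Fintype Y] (e : ι × Y ≃ ι') (M : Matrix ι' κ R) :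
    Mᵀ * M = ∑ y, (M.submatrix (fun a => e (a, y)) id)ᵀ * M.submatrix (fun a => e (a, y)) id := by
  ext k k'
  simp only [mul_apply, transpose_apply, Matrix.sum_apply, submatrix_apply, id]
  rw [← e.sum_comp, Fintype.sum_prod_type, Finset.sum_comm]

section OpNorm

variable {ι κ : Type*} [Fintype ι] [Fintype κ]

lemma sqrt_sum_sq_mulVec_le_sqrt_sum_sq {A : Matrix ι κ ℝ} {x : κ → ℝ} (hx : ∑ j, x j ^ 2 ≤ 1) :
    √(∑ i, (A *ᵥ x) i ^ 2) ≤ √(∑ i, ∑ j, A i j ^ 2) := by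
  gcongr with i
  calc (A *ᵥ x) i ^ 2 ≤ (∑ j, A i j ^ 2) * ∑ j, x j ^ 2 := Finset.sum_mul_sq_le_sq_mul_sq _ _ _
    _ ≤ ∑ j, A i j ^ 2 := mul_le_of_le_one_right (by positivity) hx

lemma sqrt_sum_sq_mulVec_le_opNorm (A : Matrix ι κ ℝ) {x : κ → ℝ} (hx : ∑ j, x j ^ 2 ≤ 1) :
    √(∑ i, (A *ᵥ x) i ^ 2) ≤ opNorm A :=
  le_csSup ⟨_, fun _ ⟨_, hy, hc⟩ => hc ▸ sqrt_sum_sq_mulVec_le_sqrt_sum_sq hy⟩ ⟨x, hx, rfl⟩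

lemma opNorm_nonneg (A : Matrix ι κ ℝ) : 0 ≤ opNorm A :=
  (Real.sqrt_nonneg _).trans (sqrt_sum_sq_mulVec_le_opNorm A (x := 0) (by simp))

lemma sum_sq_mulVec_le_opNorm_sq (A : Matrix ι κ ℝ) (y : κ → ℝ) :
    ∑ i, (A *ᵥ y) i ^ 2 ≤ opNorm A ^ 2 * ∑ j, y j ^ 2 := by
  set s := ∑ j, y j ^ 2
  rcases (show 0 ≤ s by positivity).eq_or_lt with hs | hs
  · have hy : y = 0 := funext fun j =>
      pow_eq_zero_iff two_ne_zero |>.mp <|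
        (Finset.sum_eq_zero_iff_of_nonneg fun j _ => sq_nonneg (y j)).mp hs.symm j
          (Finset.mem_univ j)
    simp [hy, ← hs]
  · have hsqrt : √s ^ 2 = s := Real.sq_sqrt hs.le
    have hunit : ∑ j, ((√s)⁻¹ • y) j ^ 2 = 1 := by
      simp only [Pi.smul_apply, smul_eq_mul, mul_pow, ← Finset.mul_sum, inv_pow, hsqrt]
      exact inv_mul_cancel₀ hs.ne'
    have hle := sqrt_sum_sq_mulVec_le_opNorm A hunit.le
    rw [Real.sqrt_le_left (opNorm_nonneg A), mulVec_smul] at hle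
    simp only [Pi.smul_apply, smul_eq_mul, mul_pow, ← Finset.mul_sum, inv_pow, hsqrt] at hle
    rwa [inv_mul_le_iff₀ hs, mul_comm] at hle

end OpNorm

section Factorizations

variable {ι κ α : Type*}

lemma mul_mul_transpose_eq_self_of_eq_mul_transpose [Fintype κ] [Fintype α] [DecidableEq α]
    {A : Matrix ι κ ℝ} {B : Matrix ι α ℝ} {V : Matrix κ α ℝ} (hV : Vᵀ * V = 1)
    (hA : A = B * Vᵀ) : A * V * Vᵀ = A := by
  rw [hA, Matrix.mul_assoc B, hV, Matrix.mul_one]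

variable [Fintype ι] [Fintype κ] [Fintype α] [DecidableEq α]

lemma sum_sq_col_le_opNorm_sq_mul {A : Matrix ι κ ℝ} {B : Matrix ι α ℝ} {V : Matrix κ α ℝ}
    (hV : Vᵀ * V = 1) (hA : A = B * Vᵀ) (b : κ) :
    ∑ a, A a b ^ 2 ≤ opNorm A ^ 2 * ∑ k, V b k ^ 2 := by
  have hcol : (fun a => A a b) = A *ᵥ (V *ᵥ V b) := by
    rw [mulVec_mulVec]
    ext a
    conv_lhs => rw [← mul_mul_transpose_eq_self_of_eq_mul_transpose hV hA]
    rfl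
  calc ∑ a, A a b ^ 2 = ∑ a, (A *ᵥ (V *ᵥ V b)) a ^ 2 := by rw [← hcol]
    _ ≤ opNorm A ^ 2 * ∑ c, (V *ᵥ V b) c ^ 2 := sum_sq_mulVec_le_opNorm_sq A _
    _ = opNorm A ^ 2 * ∑ k, V b k ^ 2 := by
      rw [sum_sq_mulVec_of_transpose_mul_self_eq_one hV]

lemma sum_sq_le_card_mul_opNorm_sq {A : Matrix ι κ ℝ} {B : Matrix ι α ℝ} {V : Matrix κ α ℝ}
    (hV : Vᵀ * V = 1) (hA : A = B * Vᵀ) :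
    ∑ a, ∑ b, A a b ^ 2 ≤ Fintype.card α * opNorm A ^ 2 := by
  calc ∑ a, ∑ b, A a b ^ 2 = ∑ a, ∑ k, (A * V) a k ^ 2 := by
        conv_lhs => rw [← mul_mul_transpose_eq_self_of_eq_mul_transpose hV hA]
        exact Finset.sum_congr rfl fun a _ => sum_sq_mul_transpose_apply hV _ a
    _ = ∑ k, ∑ a, (A *ᵥ fun c => V c k) a ^ 2 := Finset.sum_comm
    _ ≤ ∑ k, opNorm A ^ 2 * ∑ c, V c k ^ 2 :=
        Finset.sum_le_sum fun k _ => sum_sq_mulVec_le_opNorm_sq A _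
    _ = Fintype.card α * opNorm A ^ 2 := by
        simp [sum_sq_col_of_transpose_mul_self_eq_one hV]

lemma exists_orthogonal_eq_mul_transpose {W U : Matrix ι α ℝ} {R V : Matrix κ α ℝ}
    {S : Matrix α α ℝ} (hW : Wᵀ * W = 1) (hU : Uᵀ * U = 1) (hV : Vᵀ * V = 1) (hS : IsUnit S)
    (h : W * Rᵀ = U * S * Vᵀ) : ∃ Q : Matrix α α ℝ, Qᵀ * Q = 1 ∧ W = U * Qᵀ := by
  have hUW : U = W * (Rᵀ * V * S⁻¹) := by
    rw [← Matrix.mul_assoc, ← Matrix.mul_assoc, h, Matrix.mul_assoc (U * S), hV, Matrix.mul_one,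
      Matrix.mul_assoc, mul_nonsing_inv S ((isUnit_iff_isUnit_det S).mp hS), Matrix.mul_one]
  generalize Rᵀ * V * S⁻¹ = Q at hUW
  have hQ : Qᵀ * Q = 1 := by
    rw [← hU, hUW, transpose_mul, Matrix.mul_assoc, ← Matrix.mul_assoc Wᵀ, hW, Matrix.one_mul]
  refine ⟨Q, hQ, ?_⟩
  rw [hUW, Matrix.mul_assoc, mul_eq_one_comm.mp hQ, Matrix.mul_one]

end Factorizations

section Incoherence

variable {ι κ : Type*}

lemma rowNorm_sq [Fintype κ] (A : Matrix ι κ ℝ) (a : ι) : rowNorm A a ^ 2 = ∑ j, A a j ^ 2 :=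
  Real.sq_sqrt (by positivity)

variable [Fintype ι] [Fintype κ]

lemma rowNorm_le_twoInfNorm (A : Matrix ι κ ℝ) (a : ι) : rowNorm A a ≤ twoInfNorm A :=
  le_ciSup (Set.finite_range _).bddAbove a

lemma incoh_nonneg (A : Matrix ι κ ℝ) : 0 ≤ incoh A :=
  mul_nonneg (Real.sqrt_nonneg _) (Real.iSup_nonneg fun _ => Real.sqrt_nonneg _)

lemma incoh_sq (A : Matrix ι κ ℝ) :
    incoh A ^ 2 = Fintype.card ι / Fintype.card κ * twoInfNorm A ^ 2 := by
  rw [incoh, mul_pow, Real.sq_sqrt (by positivity)]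

variable [DecidableEq κ]

lemma one_le_incoh [Nonempty κ] {A : Matrix ι κ ℝ} (hA : Aᵀ * A = 1) : 1 ≤ incoh A := by
  have hcard : (Fintype.card κ : ℝ) ≤ Fintype.card ι * twoInfNorm A ^ 2 :=
    calc (Fintype.card κ : ℝ) = ∑ a, rowNorm A a ^ 2 := by
          simp only [rowNorm_sq, sum_sq_eq_trace_transpose_mul_self, hA, trace_one]
      _ ≤ ∑ _a : ι, twoInfNorm A ^ 2 := Finset.sum_le_sum fun a _ =>
          pow_le_pow_left₀ (Real.sqrt_nonneg _) (rowNorm_le_twoInfNorm A a) 2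
      _ = Fintype.card ι * twoInfNorm A ^ 2 := by simp
  have hκ : (0 : ℝ) < Fintype.card κ := by exact_mod_cast Fintype.card_pos
  have hsq : 1 ≤ incoh A ^ 2 := by
    rw [incoh_sq, div_mul_eq_mul_div, one_le_div hκ]
    exact hcard
  nlinarith [incoh_nonneg A]

lemma one_le_of_incoh_le_sqrt [Nonempty κ] {A : Matrix ι κ ℝ} (hA : Aᵀ * A = 1) {μ : ℝ}
    (h : incoh A ≤ √μ) : 1 ≤ μ :=
  Real.one_le_sqrt.mp ((one_le_incoh hA).trans h)

lemma mul_card_nonneg_of_incoh_le_sqrt {A : Matrix ι κ ℝ} (hA : Aᵀ * A = 1) {μ : ℝ}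
    (h : incoh A ≤ √μ) : 0 ≤ μ * Fintype.card κ := by
  cases isEmpty_or_nonempty κ
  · simp
  · have := one_le_of_incoh_le_sqrt hA h
    positivity

lemma sum_sq_row_le_of_incoh_le_sqrt {A : Matrix ι κ ℝ} (hA : Aᵀ * A = 1) {μ : ℝ}
    (h : incoh A ≤ √μ) (a : ι) : ∑ j, A a j ^ 2 ≤ μ * Fintype.card κ / Fintype.card ι := by
  cases isEmpty_or_nonempty κ
  · simp
  have hμ : incoh A ^ 2 ≤ μ := by
    simpa [Real.sq_sqrt (zero_le_one.trans (one_le_of_incoh_le_sqrt hA h))] using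
      pow_le_pow_left₀ (incoh_nonneg A) h 2
  have hι : (0 : ℝ) < Fintype.card ι := by exact_mod_cast Fintype.card_pos_iff.mpr ⟨a⟩
  have hκ : (0 : ℝ) < Fintype.card κ := by exact_mod_cast Fintype.card_pos
  rw [incoh_sq] at hμ
  rw [← rowNorm_sq, le_div_iff₀ hι]
  calc rowNorm A a ^ 2 * Fintype.card ι ≤ twoInfNorm A ^ 2 * Fintype.card ι := by
        gcongr
        exacts [Real.sqrt_nonneg _, rowNorm_le_twoInfNorm A a]
    _ ≤ μ * Fintype.card κ := by
        rw [div_mul_eq_mul_div, div_le_iff₀ hκ] at hμ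
        linarith

end Incoherence

lemma sum_sq_row_le_of_mul_transpose_eq {ι κ α : Type*} [Fintype ι] [Fintype κ] [Fintype α]
    [DecidableEq α] {W U : Matrix ι α ℝ} {R V : Matrix κ α ℝ} {S : Matrix α α ℝ}
    (hW : Wᵀ * W = 1) (hU : Uᵀ * U = 1) (hV : Vᵀ * V = 1) (hS : IsUnit S)
    (h : W * Rᵀ = U * S * Vᵀ) {μ : ℝ} (hinc : incoh U ≤ √μ) (a : ι) :
    ∑ k, W a k ^ 2 ≤ μ * Fintype.card α / Fintype.card ι := by
  obtain ⟨Q, hQ, rfl⟩ := exists_orthogonal_eq_mul_transpose hW hU hV hS h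
  rw [sum_sq_mul_transpose_apply hQ]
  exact sum_sq_row_le_of_incoh_le_sqrt hU hinc a

lemma le_sSup_of_mem_Icc (f : ℕ → ℝ) {a b i : ℕ} (h₁ : a ≤ i) (h₂ : i ≤ b) :
    f i ≤ sSup {c : ℝ | ∃ j, a ≤ j ∧ j ≤ b ∧ c = f j} := by
  refine le_csSup (((Set.finite_Icc a b).image f).bddAbove.mono ?_) ⟨i, h₁, h₂, rfl⟩
  rintro _ ⟨j, hj₁, hj₂, rfl⟩
  exact ⟨j, ⟨hj₁, hj₂⟩, rfl⟩

section TensorTrain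

variable {m : ℕ} (d r : ℕ → ℕ) (T : (i : ℕ) → Fin (d i) → Matrix (Fin (r i)) (Fin (r (i + 1))) ℝ)

-- Row `a` of `leftInterface i` is `𝟙ᵀ T₀(a₀) ⋯ Tᵢ₋₁(aᵢ₋₁)` and row `b` of `rightInterface i`
-- is `Tᵢ(bᵢ) ⋯ Tₘ₋₁(bₘ₋₁) 𝟙`; the all-ones vectors realise the sums over `r 0` and `r m` in
-- `ttTensor`.
noncomputable def leftInterface : (i : ℕ) → i ≤ m → Matrix (sepRow d m i) (Fin (r i)) ℝ
  | 0, _ => of fun _ _ => 1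
  | i + 1, h => of fun a =>
      leftInterface i (Nat.le_of_succ_le h) (fun j => a ⟨j.1, Nat.lt_succ_of_lt j.2⟩) ᵥ*
        T i (a ⟨⟨i, h⟩, Nat.lt_succ_self i⟩)

noncomputable def rightInterface (i : ℕ) : Matrix (sepCol d m i) (Fin (r i)) ℝ :=
  if h : i < m then
    of fun b => T i (b ⟨⟨i, h⟩, lt_irrefl i⟩) *ᵥ
      rightInterface (i + 1) (fun j => b ⟨j.1, fun hj => j.2 (Nat.lt_succ_of_lt hj)⟩)
  else of fun _ _ => 1
termination_by m - i

lemma rightInterface_apply_of_lt {i : ℕ} (h : i < m) (b : sepCol d m i) :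
    rightInterface d r T i b = T i (b ⟨⟨i, h⟩, lt_irrefl i⟩) *ᵥ
      rightInterface d r T (i + 1) (fun j => b ⟨j.1, fun hj => j.2 (Nat.lt_succ_of_lt hj)⟩) := by
  rw [rightInterface, dif_pos h]
  rfl

lemma rightInterface_apply_of_le {i : ℕ} (h : m ≤ i) (b : sepCol d m i) :
    rightInterface d r T i b = 1 := by
  rw [rightInterface, dif_neg h.not_gt]
  rfl

lemma leftInterface_eq_one_vecMul_ttProd (x : (j : Fin m) → Fin (d j)) :
    ∀ (k : ℕ) (hk : k ≤ m), leftInterface d r T k hk (fun j => x j.1) = 1 ᵥ* ttProd r d T x k hk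
  | 0, _ => by ext; simp [leftInterface, ttProd]
  | k + 1, hk => by
    rw [ttProd, ← vecMul_vecMul, ← leftInterface_eq_one_vecMul_ttProd x k]
    rfl

lemma leftInterface_dotProduct_rightInterface (x : (j : Fin m) → Fin (d j)) (n : ℕ) :
    ∀ (i : ℕ) (hi : i + n = m), leftInterface d r T i (by omega) (fun j => x j.1) ⬝ᵥ
      rightInterface d r T i (fun j => x j.1) = ttTensor r d T m x := by
  induction n with
  | zero =>
    intro i hi
    obtain rfl : i = m := hi
    rw [rightInterface_apply_of_le d r T le_rfl, leftInterface_eq_one_vecMul_ttProd]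
    simp only [ttTensor, dotProduct, vecMul, mul_one, one_mul, Pi.one_apply]
    exact Finset.sum_comm
  | succ n ih =>
    intro i hi
    rw [← ih (i + 1) (by omega), rightInterface_apply_of_lt d r T (by omega), dotProduct_mulVec]
    rfl

lemma sep_ttTensor_eq_mul (i : ℕ) (hi : i ≤ m) :
    sep d (ttTensor r d T m) i = leftInterface d r T i hi * (rightInterface d r T i)ᵀ := by
  ext a b
  set e := Equiv.piEquivPiSubtypeProd (fun j : Fin m => (j : ℕ) < i) (fun j => Fin (d j))
  have h := leftInterface_dotProduct_rightInterface d r T (e.symm (a, b)) (m - i) i (by omega)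
  change leftInterface d r T i _ (e (e.symm (a, b))).1 ⬝ᵥ
    rightInterface d r T i (e (e.symm (a, b))).2 = _ at h
  rw [e.apply_symm_apply] at h
  exact h.symm

lemma sum_sq_sep (F : ((j : Fin m) → Fin (d j)) → ℝ) (i : ℕ) :
    ∑ x, F x ^ 2 = ∑ a, ∑ b, sep d F i a b ^ 2 := by
  rw [← (Equiv.piEquivPiSubtypeProd (fun j : Fin m => (j : ℕ) < i) _).symm.sum_comp,
    Fintype.sum_prod_type]
  rfl

lemma mergeRow_restrict (i : ℕ) (a : sepRow d m i) (y : Fin (d i)) :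
    (fun j => mergeRow d m i a y ⟨j.1, Nat.lt_succ_of_lt j.2⟩ : sepRow d m i) = a := by
  funext j
  simp only [mergeRow, dif_pos j.2]

lemma mergeRow_apply_self {i : ℕ} (hi : i < m) (a : sepRow d m i) (y : Fin (d i)) :
    mergeRow d m i a y ⟨⟨i, hi⟩, Nat.lt_succ_self i⟩ = y := by
  simp only [mergeRow, dif_neg (lt_irrefl i)]
  rfl

def mergeRowEquiv {i : ℕ} (hi : i < m) : sepRow d m i × Fin (d i) ≃ sepRow d m (i + 1) where
  toFun p := mergeRow d m i p.1 p.2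
  invFun a := (fun j => a ⟨j.1, Nat.lt_succ_of_lt j.2⟩, a ⟨⟨i, hi⟩, Nat.lt_succ_self i⟩)
  left_inv p := Prod.ext (mergeRow_restrict d i p.1 p.2) (mergeRow_apply_self d hi p.1 p.2)
  right_inv a := by
    funext j
    by_cases hj : (j.1 : ℕ) < i
    · simp only [mergeRow, dif_pos hj]
    · obtain rfl : j = ⟨⟨i, hi⟩, Nat.lt_succ_self i⟩ :=
        Subtype.ext (Fin.ext (show (j.1 : ℕ) = i by have := j.2; omega))
      exact mergeRow_apply_self d hi _ _

lemma card_sepRow_succ {i : ℕ} (hi : i < m) :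
    Fintype.card (sepRow d m (i + 1)) = Fintype.card (sepRow d m i) * d i := by
  rw [← Fintype.card_congr (mergeRowEquiv d hi), Fintype.card_prod, Fintype.card_fin]

lemma leftInterface_submatrix_mergeRow {i : ℕ} (hi : i < m) (y : Fin (d i)) :
    (leftInterface d r T (i + 1) hi).submatrix (fun a => mergeRow d m i a y) id =
      leftInterface d r T i hi.le * T i y := by
  ext a k
  change (leftInterface d r T i _ (fun j => mergeRow d m i a y ⟨j.1, _⟩) ᵥ*
    T i (mergeRow d m i a y ⟨⟨i, hi⟩, _⟩)) k = _
  rw [mergeRow_restrict, mergeRow_apply_self d hi]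
  rfl

def lastColEquiv (hm : 0 < m) : Fin (d (m - 1)) ≃ sepCol d m (m - 1) where
  toFun := lastCol d m
  invFun b := b ⟨⟨m - 1, Nat.sub_lt hm one_pos⟩, lt_irrefl _⟩
  left_inv _ := rfl
  right_inv b := by
    funext j
    obtain rfl : j = ⟨⟨m - 1, Nat.sub_lt hm one_pos⟩, lt_irrefl _⟩ :=
      Subtype.ext (Fin.ext (show (j.1 : ℕ) = m - 1 by have := j.1.2; have := j.2; omega))
    rfl

lemma card_sepCol_pred (hm : 0 < m) : Fintype.card (sepCol d m (m - 1)) = d (m - 1) := by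
  rw [← Fintype.card_congr (lastColEquiv d hm), Fintype.card_fin]

lemma rightInterface_lastCol (hm : 0 < m) (x : Fin (d (m - 1))) :
    rightInterface d r T (m - 1) (lastCol d m x) = T (m - 1) x *ᵥ 1 := by
  rw [rightInterface_apply_of_lt d r T (by omega), rightInterface_apply_of_le d r T (by omega)]
  rfl

lemma leftInterface_transpose_mul_self (hr0 : r 0 = 1) :
    ∀ (i : ℕ) (hi : i ≤ m), (∀ j < i, ∑ y, (T j y)ᵀ * T j y = 1) →
      (leftInterface d r T i hi)ᵀ * leftInterface d r T i hi = 1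
  | 0, hi, _ => by
    have : Subsingleton (Fin (r 0)) := by rw [hr0]; infer_instance
    have : IsEmpty {j : Fin m // (j : ℕ) < 0} := ⟨fun j => Nat.not_lt_zero _ j.2⟩
    ext k k'
    obtain rfl := Subsingleton.elim k k'
    simp [leftInterface, mul_apply]
  | i + 1, hi, hT => by
    have ih := leftInterface_transpose_mul_self hr0 i (Nat.le_of_succ_le hi)
      fun j hj => hT j (Nat.lt_succ_of_lt hj)
    have hi' : i ≤ m := Nat.le_of_succ_le hi
    calc _ = ∑ y, (leftInterface d r T i hi' * T i y)ᵀ * (leftInterface d r T i hi' * T i y) := by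
          rw [transpose_mul_self_eq_sum_submatrix (mergeRowEquiv d hi)]
          exact Finset.sum_congr rfl fun y _ => by
            rw [← leftInterface_submatrix_mergeRow d r T hi y]
            rfl
      _ = ∑ y, (T i y)ᵀ * T i y := Finset.sum_congr rfl fun y _ => by
          rw [transpose_mul, Matrix.mul_assoc, ← Matrix.mul_assoc (leftInterface d r T i hi')ᵀ, ih,
            Matrix.one_mul]
      _ = 1 := hT i (Nat.lt_succ_self i)

lemma sum_sq_core_eq_sum_sq_leftInterface {i : ℕ} (hi : i < m)
    (hW : (leftInterface d r T i hi.le)ᵀ * leftInterface d r T i hi.le = 1)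
    (y : Fin (d i)) :
    ∑ j, ∑ k, T i y j k ^ 2 =
      ∑ a, ∑ k, leftInterface d r T (i + 1) hi (mergeRow d m i a y) k ^ 2 := by
  rw [← sum_sq_mul_of_transpose_mul_self_eq_one hW, ← leftInterface_submatrix_mergeRow]
  rfl

lemma sum_sq_core_le {i : ℕ} (hi : i < m)
    (hW : (leftInterface d r T i hi.le)ᵀ * leftInterface d r T i hi.le = 1)
    {c : ℝ} (hc : 0 ≤ c)
    (hrow : ∀ a,
      ∑ k, leftInterface d r T (i + 1) hi a k ^ 2 ≤ c / Fintype.card (sepRow d m (i + 1)))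
    (y : Fin (d i)) : ∑ j, ∑ k, T i y j k ^ 2 ≤ c / d i := by
  rw [card_sepRow_succ d hi] at hrow
  rw [sum_sq_core_eq_sum_sq_leftInterface d r T hi hW]
  calc _ ≤ ∑ _a : sepRow d m i, c / ↑(Fintype.card (sepRow d m i) * d i) :=
        Finset.sum_le_sum fun a _ => hrow _
    _ ≤ c / d i := by
        rw [Finset.sum_const, Finset.card_univ, nsmul_eq_mul, ← mul_div_assoc, Nat.cast_mul]
        rcases (Fintype.card (sepRow d m i)).eq_zero_or_pos with h | h
        · rw [h, Nat.cast_zero, zero_mul, zero_div]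
          positivity
        · rw [mul_div_mul_left _ _ (by positivity)]

lemma sum_sq_core_le_of_incoh {i : ℕ} (hi : i < m)
    (hW : (leftInterface d r T i hi.le)ᵀ * leftInterface d r T i hi.le = 1)
    (hW' : (leftInterface d r T (i + 1) hi)ᵀ * leftInterface d r T (i + 1) hi = 1)
    {U : Matrix (sepRow d m (i + 1)) (Fin (r (i + 1))) ℝ}
    {S : Matrix (Fin (r (i + 1))) (Fin (r (i + 1))) ℝ}
    {V : Matrix (sepCol d m (i + 1)) (Fin (r (i + 1))) ℝ} (hU : Uᵀ * U = 1) (hV : Vᵀ * V = 1)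
    (hS : IsUnit S) (hfact : sep d (ttTensor r d T m) (i + 1) = U * S * Vᵀ) {μ : ℝ}
    (hinc : incoh U ≤ √μ) (y : Fin (d i)) : ∑ j, ∑ k, T i y j k ^ 2 ≤ μ * r (i + 1) / d i := by
  have hrow := sum_sq_row_le_of_mul_transpose_eq hW' hU hV hS
    ((sep_ttTensor_eq_mul d r T _ _).symm.trans hfact) hinc
  have hc := mul_card_nonneg_of_incoh_le_sqrt hU hinc
  rw [Fintype.card_fin] at hrow hc
  exact sum_sq_core_le d r T hi hW hc hrow y

lemma sum_sq_sep_lastCol (hm : 0 < m) (hrm : r m = 1)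
    (hW : (leftInterface d r T (m - 1) (Nat.sub_le m 1))ᵀ *
      leftInterface d r T (m - 1) (Nat.sub_le m 1) = 1)
    (x : Fin (d (m - 1))) :
    ∑ a, sep d (ttTensor r d T m) (m - 1) a (lastCol d m x) ^ 2 =
      ∑ j, ∑ k, T (m - 1) x j k ^ 2 := by
  have : Unique (Fin (r (m - 1 + 1))) := by rw [Nat.sub_add_cancel hm, hrm]; infer_instance
  rw [sep_ttTensor_eq_mul d r T (m - 1) (Nat.sub_le m 1)]
  change ∑ a, (leftInterface d r T (m - 1) _ *ᵥ
    rightInterface d r T (m - 1) (lastCol d m x)) a ^ 2 = _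
  rw [sum_sq_mulVec_of_transpose_mul_self_eq_one hW, rightInterface_lastCol d r T hm]
  simp [mulVec, dotProduct]

lemma sum_sq_last_core_le (hm : 0 < m) (hrm : r m = 1)
    (hW : (leftInterface d r T (m - 1) (Nat.sub_le m 1))ᵀ *
      leftInterface d r T (m - 1) (Nat.sub_le m 1) = 1)
    {B : Matrix (sepRow d m (m - 1)) (Fin (r (m - 1))) ℝ}
    {V : Matrix (sepCol d m (m - 1)) (Fin (r (m - 1))) ℝ} (hV : Vᵀ * V = 1)
    (hfact : sep d (ttTensor r d T m) (m - 1) = B * Vᵀ) {μ σ : ℝ} (hinc : incoh V ≤ √μ)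
    (hσ : opNorm (sep d (ttTensor r d T m) (m - 1)) ≤ σ) (x : Fin (d (m - 1))) :
    ∑ j, ∑ k, T (m - 1) x j k ^ 2 ≤ σ ^ 2 * μ * r (m - 1) / d (m - 1) := by
  have hrow := sum_sq_row_le_of_incoh_le_sqrt hV hinc (lastCol d m x)
  rw [Fintype.card_fin, card_sepCol_pred d hm] at hrow
  calc ∑ j, ∑ k, T (m - 1) x j k ^ 2
      = ∑ a, sep d (ttTensor r d T m) (m - 1) a (lastCol d m x) ^ 2 :=
        (sum_sq_sep_lastCol d r T hm hrm hW x).symm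
    _ ≤ opNorm (sep d (ttTensor r d T m) (m - 1)) ^ 2 * ∑ k, V (lastCol d m x) k ^ 2 :=
        sum_sq_col_le_opNorm_sq_mul hV hfact _
    _ ≤ σ ^ 2 * (μ * r (m - 1) / d (m - 1)) := by
        gcongr
        exact opNorm_nonneg _
    _ = σ ^ 2 * μ * r (m - 1) / d (m - 1) := by ring

lemma sum_sum_sq_sep_lastCol (hm : 0 < m) (F : ((j : Fin m) → Fin (d j)) → ℝ) :
    ∑ x : Fin (d (m - 1)), ∑ a, sep d F (m - 1) a (lastCol d m x) ^ 2 = ∑ x, F x ^ 2 := by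
  calc _ = ∑ b, ∑ a, sep d F (m - 1) a b ^ 2 := Equiv.sum_comp (lastColEquiv d hm) _
    _ = _ := by rw [Finset.sum_comm, sum_sq_sep]

lemma tfrob_le_sqrt_card_mul {α : Type*} [Fintype α] [DecidableEq α]
    {F : ((j : Fin m) → Fin (d j)) → ℝ} {i : ℕ} {B : Matrix (sepRow d m i) α ℝ}
    {V : Matrix (sepCol d m i) α ℝ} (hV : Vᵀ * V = 1) (hF : sep d F i = B * Vᵀ) {σ : ℝ}
    (hσ : opNorm (sep d F i) ≤ σ) : tfrob F ≤ √(Fintype.card α) * σ := by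
  have hσ₀ : 0 ≤ σ := (opNorm_nonneg _).trans hσ
  rw [tfrob, sum_sq_sep d F i, ← Real.sqrt_sq hσ₀, ← Real.sqrt_mul (by positivity)]
  refine Real.sqrt_le_sqrt ((sum_sq_le_card_mul_opNorm_sq hV hF).trans ?_)
  gcongr
  exact opNorm_nonneg _

end TensorTrain

/-- for a left-orthogonal TT decomposition of an incoherent tensor
(`Incoh(𝒯) ≤ √μ` witnessed by factorizations of the separations), the component slices
satisfy `max_{xᵢ}‖Tᵢ(:,xᵢ,:)‖_F² ≤ μrᵢ/dᵢ`, `‖Tᵢ‖_F = √rᵢ` for `i ≤ m−1`, and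
`max_{x_m}‖T_m(:,x_m)‖_F² ≤ σ_max(𝒯)²μr_{m−1}/d_m`,
`‖T_m‖_F = ‖𝒯‖_F ≤ √(min_i rᵢ)·σ_max(𝒯)`. -/
theorem stmt13 {m : ℕ} (hm : 2 ≤ m) (d r : ℕ → ℕ) (hr0 : r 0 = 1) (hrm : r m = 1) (μ : ℝ)
    (T : (i : ℕ) → Fin (d i) → Matrix (Fin (r i)) (Fin (r (i + 1))) ℝ)
    (hOrth : ∀ i, i < m - 1 → ∑ x : Fin (d i), (T i x)ᵀ * T i x = 1)
    (U : (i : ℕ) → Matrix (sepRow d m i) (Fin (r i)) ℝ)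
    (S : (i : ℕ) → Matrix (Fin (r i)) (Fin (r i)) ℝ)
    (V : (i : ℕ) → Matrix (sepCol d m i) (Fin (r i)) ℝ)
    (hU : ∀ i, 1 ≤ i → i ≤ m - 1 → (U i)ᵀ * U i = 1)
    (hV : ∀ i, 1 ≤ i → i ≤ m - 1 → (V i)ᵀ * V i = 1)
    (hS : ∀ i, 1 ≤ i → i ≤ m - 1 → IsUnit (S i))
    (hfact : ∀ i, 1 ≤ i → i ≤ m - 1 → sep d (ttTensor r d T m) i = U i * S i * (V i)ᵀ)
    (hIncU : ∀ i, 1 ≤ i → i ≤ m - 1 → incoh (U i) ≤ Real.sqrt μ)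
    (hIncV : ∀ i, 1 ≤ i → i ≤ m - 1 → incoh (V i) ≤ Real.sqrt μ)
    (σmax : ℝ)
    (hσmax : σmax = sSup {c : ℝ | ∃ i, 1 ≤ i ∧ i ≤ m - 1 ∧
      c = opNorm (sep d (ttTensor r d T m) i)}) :
    (∀ i, i < m - 1 → (∀ x : Fin (d i), ∑ j, ∑ k, (T i x j k) ^ 2 ≤ μ * r (i + 1) / d i) ∧
      Real.sqrt (∑ x : Fin (d i), ∑ j, ∑ k, (T i x j k) ^ 2) = Real.sqrt (r (i + 1))) ∧
    (∀ x : Fin (d (m - 1)), ∑ j, ∑ k, (T (m - 1) x j k) ^ 2 ≤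
      σmax ^ 2 * μ * r (m - 1) / d (m - 1)) ∧
    Real.sqrt (∑ x : Fin (d (m - 1)), ∑ j, ∑ k, (T (m - 1) x j k) ^ 2) =
      tfrob (ttTensor r d T m) ∧
    tfrob (ttTensor r d T m) ≤
      Real.sqrt (((Finset.Icc 1 (m - 1)).inf' (Finset.nonempty_Icc.2 (by omega)) r : ℕ) : ℝ) *
        σmax := by
  have hW : ∀ i (hi : i ≤ m), i ≤ m - 1 →
      (leftInterface d r T i hi)ᵀ * leftInterface d r T i hi = 1 :=
    fun i hi hi' => leftInterface_transpose_mul_self d r T hr0 i hi fun j hj => hOrth j (by omega)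
  have hσ : ∀ i, 1 ≤ i → i ≤ m - 1 → opNorm (sep d (ttTensor r d T m) i) ≤ σmax :=
    fun i h₁ h₂ => hσmax ▸ le_sSup_of_mem_Icc (fun i => opNorm (sep d (ttTensor r d T m) i)) h₁ h₂
  have hm₀ : 0 < m := by omega
  refine ⟨fun i hi => ⟨fun x => ?_, ?_⟩, fun x => ?_, ?_, ?_⟩
  · exact sum_sq_core_le_of_incoh d r T (by omega) (hW i _ (by omega)) (hW (i + 1) _ (by omega))
      (hU _ (by omega) hi) (hV _ (by omega) hi) (hS _ (by omega) hi) (hfact _ (by omega) hi)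
      (hIncU _ (by omega) hi) x
  · rw [sum_sum_sq_eq_card_of_sum_transpose_mul_self_eq_one (hOrth i hi), Fintype.card_fin]
  · exact sum_sq_last_core_le d r T hm₀ hrm (hW _ _ le_rfl) (hV _ (by omega) le_rfl)
      (hfact _ (by omega) le_rfl) (hIncV _ (by omega) le_rfl) (hσ _ (by omega) le_rfl) x
  · simp_rw [← sum_sq_sep_lastCol d r T hm₀ hrm (hW _ _ le_rfl)]
    rw [sum_sum_sq_sep_lastCol d hm₀, tfrob]
  · obtain ⟨i, hi, hmin⟩ := Finset.exists_mem_eq_inf' (s := Finset.Icc 1 (m - 1))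
      (Finset.nonempty_Icc.2 (by omega)) r
    obtain ⟨h₁, h₂⟩ := Finset.mem_Icc.mp hi
    simpa [hmin] using tfrob_le_sqrt_card_mul d (hV i h₁ h₂) (hfact i h₁ h₂) (hσ i h₁ h₂)
end

section
/- Let 𝒜 = [A₁,…,A_m] and ℬ = [B₁,…,B_m] be tensors of TT rank (r₁,…,r_{m−1}) in ℝ^{d₁×⋯×d_m} with arbitrary TT decompositions Aᵢ, Bᵢ ∈ ℝ^{r_{i−1}×dᵢ×rᵢ}. Then the Hadamard (entrywise) product satisfies the nuclear norm bound ‖𝒜 ⊙ ℬ‖_*² ≤ ∏_{i=1}^m Σ_{xᵢ} ‖Aᵢ(:,xᵢ,:)‖_F² ‖Bᵢ(:,xᵢ,:)‖_F². -/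
open Matrix

/-!
The Hadamard product of two tensor trains is the tensor train whose cores are the Kronecker
products `Aᵢ(y) ⊗ Bᵢ(y)`. Expanding a tensor train with cores `Cᵢ` over its auxiliary indices
writes it as a sum, over paths `α`, of the elementary tensors `⊗ᵢ Cᵢ(·)_{αᵢ αᵢ₊₁}`, so its nuclear
norm is at most `∑_α ∏ᵢ Nᵢ(αᵢ, αᵢ₊₁)` with `Nᵢ(α, β) = ‖Cᵢ(·)_{αβ}‖₂`. When the outer ranks are `1`
this is the single entry of `N₁ ⋯ N_m`, which submultiplicativity of the Frobenius norm
(Cauchy–Schwarz) bounds by `∏ᵢ ‖Nᵢ‖_F`; finally `‖Nᵢ‖_F² = ∑_y ‖Aᵢ(y)‖_F² ‖Bᵢ(y)‖_F²`.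
-/

open Finset
open scoped Kronecker

noncomputable def l2norm {n : ℕ} (w : Fin n → ℝ) : ℝ := Real.sqrt (∑ y, w y ^ 2)

lemma l2norm_nonneg {n : ℕ} (w : Fin n → ℝ) : 0 ≤ l2norm w := Real.sqrt_nonneg _

lemma l2norm_sq {n : ℕ} (w : Fin n → ℝ) : l2norm w ^ 2 = ∑ y, w y ^ 2 :=
  Real.sq_sqrt (sum_nonneg fun _ _ => sq_nonneg _)

lemma exists_unit_l2norm_mul_eq {n : ℕ} (hn : 0 < n) (w : Fin n → ℝ) :
    ∃ v : Fin n → ℝ, ∑ y, v y ^ 2 = 1 ∧ ∀ y, w y = l2norm w * v y := by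
  by_cases hw : l2norm w = 0
  · have hw0 : ∀ y, w y = 0 := by
      have := l2norm_sq w
      rw [hw, zero_pow two_ne_zero, eq_comm,
        sum_eq_zero_iff_of_nonneg fun _ _ => sq_nonneg _] at this
      simpa using this
    exact ⟨Pi.single ⟨0, hn⟩ 1, by simp [sq, Pi.single_apply], fun y => by simp [hw0, hw]⟩
  · refine ⟨fun y => w y / l2norm w, ?_, fun y => (mul_div_cancel₀ _ hw).symm⟩
    simp only [div_pow, ← sum_div, ← l2norm_sq, div_self (pow_ne_zero 2 hw)]

section Decomposition

variable {m : ℕ} {d : ℕ → ℕ}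

/-- The decompositions in `tNuclear`, with factors that need not be unit vectors. -/
def HasDecompCostLE (T : ((j : Fin m) → Fin (d j)) → ℝ) (s : ℝ) : Prop :=
  ∃ (ι : Type) (_ : Fintype ι) (c : ι → ℝ) (u : ι → (j : Fin m) → Fin (d j) → ℝ),
    (∀ x, T x = ∑ l, c l * ∏ j, u l j (x j)) ∧ ∑ l, |c l| * ∏ j, l2norm (u l j) ≤ s

lemma HasDecompCostLE.nonneg {T : ((j : Fin m) → Fin (d j)) → ℝ} {s : ℝ}
    (h : HasDecompCostLE T s) : 0 ≤ s := by
  obtain ⟨ι, _, c, u, -, hs⟩ := h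
  exact le_trans (sum_nonneg fun l _ => mul_nonneg (abs_nonneg _)
    (prod_nonneg fun j _ => l2norm_nonneg _)) hs

lemma tNuclear_nonneg (T : ((j : Fin m) → Fin (d j)) → ℝ) : 0 ≤ tNuclear T :=
  Real.sInf_nonneg <| by
    rintro s ⟨k, c, u, -, -, rfl⟩
    positivity

lemma tNuclear_le_sum_abs {T : ((j : Fin m) → Fin (d j)) → ℝ} {k : ℕ} (c : Fin k → ℝ)
    (u : Fin k → (j : Fin m) → Fin (d j) → ℝ) (hu : ∀ l j, ∑ y, u l j y ^ 2 = 1)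
    (hT : ∀ x, T x = ∑ l, c l * ∏ j, u l j (x j)) :
    tNuclear T ≤ ∑ l, |c l| :=
  csInf_le ⟨0, by rintro s ⟨k, c, u, -, -, rfl⟩; positivity⟩ ⟨k, c, u, hu, hT, rfl⟩

lemma tNuclear_le_of_hasDecompCostLE {T : ((j : Fin m) → Fin (d j)) → ℝ} {s : ℝ}
    (h : HasDecompCostLE T s) : tNuclear T ≤ s := by
  by_cases hd : ∀ j : Fin m, 0 < d j
  · obtain ⟨ι, _, c, u, hT, hs⟩ := h
    choose v hv_unit hv using fun l j => exists_unit_l2norm_mul_eq (hd j) (u l j)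
    let e := Fintype.equivFin ι
    refine (tNuclear_le_sum_abs (fun l => c (e.symm l) * ∏ j, l2norm (u (e.symm l) j))
      (fun l => v (e.symm l)) (fun l => hv_unit (e.symm l)) fun x => ?_).trans ?_
    · rw [hT, ← e.symm.sum_comp]
      refine sum_congr rfl fun l _ => ?_
      rw [mul_assoc, ← prod_mul_distrib]
      simp only [← hv]
    · rw [e.symm.sum_comp (fun l => |c l * ∏ j, l2norm (u l j)|)]
      simpa only [abs_mul, abs_of_nonneg (prod_nonneg fun j _ => l2norm_nonneg _)] using hs
  · push Not at hd
    obtain ⟨j, hj⟩ := hd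
    have : IsEmpty (Fin (d j)) := by rw [Nat.le_zero.mp hj]; infer_instance
    exact (tNuclear_le_sum_abs finZeroElim finZeroElim finZeroElim
      fun x => isEmptyElim (x j)).trans (by simpa using h.nonneg)

lemma hasDecompCostLE_const (c : ℝ) : HasDecompCostLE (m := 0) (d := d) (fun _ => c) |c| :=
  ⟨Unit, inferInstance, fun _ => c, fun _ => finZeroElim, by simp, by simp⟩

lemma HasDecompCostLE.sum {κ : Type} [Fintype κ] {T : κ → ((j : Fin m) → Fin (d j)) → ℝ}
    {s : κ → ℝ} (h : ∀ i, HasDecompCostLE (T i) (s i)) :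
    HasDecompCostLE (fun x => ∑ i, T i x) (∑ i, s i) := by
  choose ι _ c u hT hs using h
  refine ⟨(i : κ) × ι i, inferInstance, fun l : (i : κ) × ι i => c l.1 l.2,
    fun l : (i : κ) × ι i => u l.1 l.2, fun x => ?_, ?_⟩
  · simp only [hT, Fintype.sum_sigma]
  · rw [Fintype.sum_sigma]
    exact sum_le_sum fun i _ => hs i

lemma HasDecompCostLE.mul_snoc {k : ℕ} {S : ((j : Fin k) → Fin (d j)) → ℝ} {s : ℝ}
    (h : HasDecompCostLE S s) (w : Fin (d k) → ℝ) :
    HasDecompCostLE (fun x : (j : Fin (k + 1)) → Fin (d j) => S (Fin.init x) * w (x (Fin.last k)))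
      (s * l2norm w) := by
  obtain ⟨ι, _, c, u, hS, hs⟩ := h
  refine ⟨ι, inferInstance, c, fun l => Fin.snoc (α := fun j => Fin (d j) → ℝ) (u l) w,
    fun x => ?_, ?_⟩
  · simp only [hS, sum_mul, Fin.prod_univ_castSucc, Fin.snoc_castSucc, Fin.snoc_last, mul_assoc,
      Fin.init]
  · simp only [Fin.prod_univ_castSucc, Fin.snoc_castSucc, Fin.snoc_last, ← mul_assoc, ← sum_mul]
    exact mul_le_mul_of_nonneg_right hs (l2norm_nonneg w)

end Decomposition

section Frobenius

variable {ι κ μ ν : Type*} [Fintype ι] [Fintype κ] [Fintype μ] [Fintype ν]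

lemma frobNorm_nonneg (A : Matrix ι κ ℝ) : 0 ≤ frobNorm A := Real.sqrt_nonneg _

lemma sq_frobNorm (A : Matrix ι κ ℝ) : frobNorm A ^ 2 = ∑ i, ∑ j, A i j ^ 2 :=
  Real.sq_sqrt (sum_nonneg fun _ _ => sum_nonneg fun _ _ => sq_nonneg _)

open scoped Matrix.Norms.Frobenius in
lemma frobNorm_eq_norm (A : Matrix ι κ ℝ) : frobNorm A = ‖A‖ := by
  simp [frobNorm, Matrix.frobenius_norm_def, Real.sqrt_eq_rpow]

open scoped Matrix.Norms.Frobenius in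
lemma frobNorm_mul_le (A : Matrix ι κ ℝ) (B : Matrix κ μ ℝ) :
    frobNorm (A * B) ≤ frobNorm A * frobNorm B := by
  simpa only [frobNorm_eq_norm] using Matrix.frobenius_norm_mul A B

lemma frobNorm_one [DecidableEq ι] : frobNorm (1 : Matrix ι ι ℝ) = Real.sqrt (Fintype.card ι) := by
  simp [frobNorm, Matrix.one_apply]

lemma frobNorm_kronecker (A : Matrix ι κ ℝ) (B : Matrix μ ν ℝ) :
    frobNorm (A ⊗ₖ B) = frobNorm A * frobNorm B := by
  rw [← sq_eq_sq₀ (frobNorm_nonneg _) (mul_nonneg (frobNorm_nonneg _) (frobNorm_nonneg _)),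
    mul_pow, sq_frobNorm, sq_frobNorm, sq_frobNorm, sum_mul_sum]
  simp only [Fintype.sum_prod_type, Matrix.kronecker_apply, mul_pow, sum_mul_sum]

lemma sq_sum_sum_le (A : Matrix ι κ ℝ) :
    (∑ i, ∑ j, A i j) ^ 2 ≤ Fintype.card ι * Fintype.card κ * frobNorm A ^ 2 := by
  have h := sq_sum_le_card_mul_sum_sq (s := univ) (f := fun p : ι × κ => A p.1 p.2)
  rw [Fintype.sum_prod_type, Fintype.sum_prod_type, card_univ, Fintype.card_prod, Nat.cast_mul] at h
  rwa [sq_frobNorm]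

end Frobenius

section TensorTrain

variable {d : ℕ → ℕ} {ρ : ℕ → Type} [∀ i, Fintype (ρ i)]

noncomputable def coreNorms (C : (i : ℕ) → Fin (d i) → Matrix (ρ i) (ρ (i + 1)) ℝ) (i : ℕ) :
    Matrix (ρ i) (ρ (i + 1)) ℝ :=
  Matrix.of fun α β => l2norm fun y => C i y α β

lemma sq_frobNorm_coreNorms (C : (i : ℕ) → Fin (d i) → Matrix (ρ i) (ρ (i + 1)) ℝ) (i : ℕ) :
    frobNorm (coreNorms C i) ^ 2 = ∑ y, frobNorm (C i y) ^ 2 := by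
  simp only [sq_frobNorm, coreNorms, Matrix.of_apply, l2norm_sq]
  exact (sum_congr rfl fun _ _ => sum_comm).trans sum_comm

variable [DecidableEq (ρ 0)]

/-- `ttProd` with arbitrary bond index types `ρ i`, so that Kronecker products of cores fit. -/
def ttChain (C : (i : ℕ) → Fin (d i) → Matrix (ρ i) (ρ (i + 1)) ℝ) {m : ℕ}
    (x : (j : Fin m) → Fin (d j)) : (k : ℕ) → k ≤ m → Matrix (ρ 0) (ρ k) ℝ
  | 0, _ => 1
  | k + 1, h => ttChain C x k (Nat.le_of_succ_le h) * C k (x ⟨k, h⟩)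

def chainProd (N : (i : ℕ) → Matrix (ρ i) (ρ (i + 1)) ℝ) : (k : ℕ) → Matrix (ρ 0) (ρ k) ℝ
  | 0 => 1
  | k + 1 => chainProd N k * N k

lemma ttChain_init (C : (i : ℕ) → Fin (d i) → Matrix (ρ i) (ρ (i + 1)) ℝ) {m : ℕ}
    (x : (j : Fin (m + 1)) → Fin (d j)) :
    ∀ (k : ℕ) (hk : k ≤ m), ttChain C x k (hk.trans m.le_succ) = ttChain C (Fin.init x) k hk
  | 0, _ => rfl
  | k + 1, hk => by
    rw [ttChain, ttChain, ttChain_init C x k]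
    rfl

theorem hasDecompCostLE_ttChain (C : (i : ℕ) → Fin (d i) → Matrix (ρ i) (ρ (i + 1)) ℝ) :
    ∀ (m : ℕ) (α : ρ 0) (β : ρ m),
      HasDecompCostLE (fun x : (j : Fin m) → Fin (d j) => ttChain C x m le_rfl α β)
        (chainProd (coreNorms C) m α β)
  | 0, α, β => by
    simpa [ttChain, chainProd, abs_of_nonneg, Matrix.one_apply, apply_ite]
      using hasDecompCostLE_const (d := d) ((1 : Matrix (ρ 0) (ρ 0) ℝ) α β)
  | m + 1, α, γ => by
    have h := HasDecompCostLE.sum fun β : ρ m =>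
      (hasDecompCostLE_ttChain C m α β).mul_snoc fun y => C m y β γ
    simp only [← ttChain_init] at h
    simp only [ttChain, chainProd, Matrix.mul_apply, coreNorms, Matrix.of_apply]
    exact h

lemma frobNorm_chainProd_le (N : (i : ℕ) → Matrix (ρ i) (ρ (i + 1)) ℝ) :
    ∀ k, frobNorm (chainProd N k) ≤
      frobNorm (1 : Matrix (ρ 0) (ρ 0) ℝ) * ∏ i ∈ range k, frobNorm (N i)
  | 0 => by simp [chainProd]
  | k + 1 => by
    rw [prod_range_succ, ← mul_assoc]
    exact (frobNorm_mul_le _ _).trans <|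
      mul_le_mul_of_nonneg_right (frobNorm_chainProd_le N k) (frobNorm_nonneg _)

theorem sq_tNuclear_ttChain_le (C : (i : ℕ) → Fin (d i) → Matrix (ρ i) (ρ (i + 1)) ℝ) {m : ℕ}
    (h0 : Fintype.card (ρ 0) = 1) (hm : Fintype.card (ρ m) = 1) :
    tNuclear (fun x : (j : Fin m) → Fin (d j) => ∑ α, ∑ β, ttChain C x m le_rfl α β) ^ 2 ≤
      ∏ i ∈ range m, ∑ y, frobNorm (C i y) ^ 2 := by
  have hdecomp := HasDecompCostLE.sum fun α => HasDecompCostLE.sum fun β =>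
    hasDecompCostLE_ttChain C m α β
  calc _ ≤ (∑ α, ∑ β, chainProd (coreNorms C) m α β) ^ 2 :=
        pow_le_pow_left₀ (tNuclear_nonneg _) (tNuclear_le_of_hasDecompCostLE hdecomp) 2
    _ ≤ frobNorm (chainProd (coreNorms C) m) ^ 2 := by
        simpa [h0, hm] using sq_sum_sum_le (chainProd (coreNorms C) m)
    _ ≤ (frobNorm (1 : Matrix (ρ 0) (ρ 0) ℝ) * ∏ i ∈ range m, frobNorm (coreNorms C i)) ^ 2 :=
        pow_le_pow_left₀ (frobNorm_nonneg _) (frobNorm_chainProd_le _ m) 2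
    _ = ∏ i ∈ range m, ∑ y, frobNorm (C i y) ^ 2 := by
        simp [frobNorm_one, h0, ← prod_pow, sq_frobNorm_coreNorms]

end TensorTrain

section Hadamard

variable {d r : ℕ → ℕ}

lemma ttProd_eq_ttChain (C : (i : ℕ) → Fin (d i) → Matrix (Fin (r i)) (Fin (r (i + 1))) ℝ)
    {m : ℕ} (x : (j : Fin m) → Fin (d j)) :
    ∀ k (hk : k ≤ m), ttProd r d C x k hk = ttChain C x k hk
  | 0, _ => rfl
  | k + 1, hk => by rw [ttProd, ttChain, ttProd_eq_ttChain C x k]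

lemma ttChain_kronecker (A B : (i : ℕ) → Fin (d i) → Matrix (Fin (r i)) (Fin (r (i + 1))) ℝ)
    {m : ℕ} (x : (j : Fin m) → Fin (d j)) :
    ∀ k (hk : k ≤ m),
      ttChain (fun i y => A i y ⊗ₖ B i y) x k hk = ttChain A x k hk ⊗ₖ ttChain B x k hk
  | 0, _ => Matrix.one_kronecker_one.symm
  | k + 1, hk => by
    rw [ttChain, ttChain, ttChain, ttChain_kronecker A B x k, Matrix.mul_kronecker_mul]

lemma ttTensor_mul_ttTensor (A B : (i : ℕ) → Fin (d i) → Matrix (Fin (r i)) (Fin (r (i + 1))) ℝ)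
    {m : ℕ} (x : (j : Fin m) → Fin (d j)) :
    ttTensor r d A m x * ttTensor r d B m x =
      ∑ α, ∑ β, ttChain (fun i y => A i y ⊗ₖ B i y) x m le_rfl α β := by
  simp only [ttTensor, ttChain_kronecker, ttProd_eq_ttChain, Fintype.sum_prod_type,
    Matrix.kronecker_apply, sum_mul_sum]

end Hadamard

/-- for tensors `𝒜 = [A₁,…,A_m]`, `ℬ = [B₁,…,B_m]` of TT rank
`(r₁,…,r_{m−1})` with arbitrary TT decompositions, the Hadamard product satisfies
`‖𝒜 ⊙ ℬ‖_*² ≤ ∏ᵢ Σ_{xᵢ} ‖Aᵢ(:,xᵢ,:)‖_F² ‖Bᵢ(:,xᵢ,:)‖_F²`. -/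
theorem stmt17 {m : ℕ} (d r : ℕ → ℕ) (hr0 : r 0 = 1) (hrm : r m = 1)
    (A B : (i : ℕ) → Fin (d i) → Matrix (Fin (r i)) (Fin (r (i + 1))) ℝ) :
    (tNuclear (fun x => ttTensor r d A m x * ttTensor r d B m x)) ^ 2 ≤
      ∏ i ∈ Finset.range m, ∑ x : Fin (d i),
        (∑ j, ∑ k, (A i x j k) ^ 2) * (∑ j, ∑ k, (B i x j k) ^ 2) := by
  have h := sq_tNuclear_ttChain_le (fun i y => A i y ⊗ₖ B i y) (m := m)
    (by simp [hr0]) (by simp [hrm])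
  simpa only [← ttTensor_mul_ttTensor, frobNorm_kronecker, mul_pow, sq_frobNorm] using h
end
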